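/- arXiv:2310.09390 — 3 statements merged into one kernel-verified Lean document; each statement's English description precedes it below -/
import Mathlib

section
/- Let d be an odd positive integer and let c be a positive integer with gcd(d,c)=1 and d-2c ≥ 1. Then every transitive permutation group G of degree d that contains a permutation whose cycle type is [d-2c, c, c] is primitive. -/
/-- The cycle type of a permutation, including fixed points as parts equal to `1`. -/
def fullCycleType {Ω : Type*} [Fintype Ω] [DecidableEq Ω] (σ : Equiv.Perm Ω) : Multiset ℕ :=
  σ.cycleType + Multiset.replicate (Fintype.card Ω - σ.support.card) 1

/-- A multiset of positive integers summing to `d`, i.e. a partition of `d`. -/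
def IsPartitionOf (d : ℕ) (D : Multiset ℕ) : Prop :=
  (∀ x ∈ D, 0 < x) ∧ D.sum = d

/-- The defect `ν(D) = Σⱼ (dⱼ − 1)` of a partition. -/
def nu (D : Multiset ℕ) : ℕ := (D.map (· - 1)).sum

/-- The partition `[2,…,2,1]` of an odd number `d`, with `(d−1)/2` parts equal to `2`. -/
def twosAndOne (d : ℕ) : Multiset ℕ := Multiset.replicate ((d - 1) / 2) 2 + {1}

/-- A subgroup of the symmetric group on `Ω` is transitive. -/
def SubgroupTransitive {Ω : Type*} (G : Subgroup (Equiv.Perm Ω)) : Prop :=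
  ∀ x y : Ω, ∃ g ∈ G, g x = y

/-- `Λ` is a block for the subgroup `G` of the symmetric group on `Ω`. -/
def IsBlockOf {Ω : Type*} (G : Subgroup (Equiv.Perm Ω)) (Λ : Set Ω) : Prop :=
  Λ.Nonempty ∧ ∀ g ∈ G, (⇑g '' Λ = Λ ∨ Disjoint (⇑g '' Λ) Λ)

/-- A block is trivial if it is a singleton or the whole set. -/
def TrivialBlock {Ω : Type*} (Λ : Set Ω) : Prop :=
  (∃ x, Λ = {x}) ∨ Λ = Set.univ

/-- A subgroup of the symmetric group is primitive: transitive with only trivial blocks. -/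
def SubgroupPrimitive {Ω : Type*} (G : Subgroup (Equiv.Perm Ω)) : Prop :=
  SubgroupTransitive G ∧ ∀ Λ : Set Ω, IsBlockOf G Λ → TrivialBlock Λ

/-- A subgroup of the symmetric group is imprimitive: transitive but not primitive. -/
def SubgroupImprimitive {Ω : Type*} (G : Subgroup (Equiv.Perm Ω)) : Prop :=
  SubgroupTransitive G ∧ ¬ SubgroupPrimitive G

/-- The orbit of `x` under a subgroup `G` of the symmetric group on `Ω`. -/
def orbSet {Ω : Type*} (G : Subgroup (Equiv.Perm Ω)) (x : Ω) : Set Ω :=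
  {y | ∃ g ∈ G, g x = y}

/-- The number of orbits of a subgroup `G` of the symmetric group on `Ω`. -/
noncomputable def numOrbits {Ω : Type*} (G : Subgroup (Equiv.Perm Ω)) : ℕ :=
  Nat.card (Set.range (orbSet G))

/-!
Let `Λ` be a block of size `b`, so `b ∣ d`, and let `t` be the number of distinct translates
`gⁱ Λ` under the element `g` of cycle type `[d-2c, c, c]`. Their union is `g`-invariant of size
`t b`, so `t b` is the sum of some of the cycle lengths of `g`; each of these is a multiple of `t`,
since a cycle meeting `gⁱ Λ` can only return to it after a power of `g` fixing `Λ`.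
Unless `b = 1`, the odd divisor `b` of `d` is prime to `c`, so it divides none of
`c`, `2c`, `d-2c`, `d-c`. Hence the translates cover `Ω`; then `t` divides `d-2c` and `c`,
so `t ∣ gcd(d, c) = 1` and `b = t b = d`.
-/

open Equiv Finset MulAction Pointwise

namespace Equiv.Perm

variable {α : Type*} [DecidableEq α]

section Partition

variable [Fintype α]

theorem exists_pow_apply_eq_self_of_mem_parts_partition {σ : Perm α} {n : ℕ}
    (hn : n ∈ σ.partition.parts) : ∃ x, (σ ^ n) x = x := by
  rcases Multiset.mem_add.mp hn with hn | hn
  · obtain ⟨c, hc, rfl⟩ := Multiset.mem_map.mp (cycleType_def σ ▸ hn)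
    obtain ⟨x, hx⟩ := (mem_cycleFactorsFinset_iff.mp hc).1.nonempty_support
    refine ⟨x, ?_⟩
    have := pow_mod_card_support_cycleOf_self_apply σ #c.support x
    rwa [← cycle_is_cycleOf hx hc, Nat.mod_self, pow_zero, eq_comm] at this
  · have hlt : #σ.support < #(univ : Finset α) := by
      have := (Multiset.mem_replicate.mp hn).1
      rw [card_univ]
      omega
    obtain ⟨x, -, hx⟩ := exists_mem_notMem_of_card_lt_card hlt
    rw [Multiset.eq_of_mem_replicate hn, pow_one]
    exact ⟨x, notMem_support.mp hx⟩

theorem parts_partition_subtypePerm_le (g : Perm α) {s : Finset α}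
    (hs : ∀ x, g x ∈ s ↔ x ∈ s) :
    (g.subtypePerm hs).partition.parts ≤ g.partition.parts := by
  set σ := g.subtypePerm hs
  set τ := g.subtypePerm (p := (· ∉ s)) (fun x => (hs x).not)
  have hg : g = ofSubtype σ * ofSubtype τ := by
    ext x
    by_cases hx : x ∈ s
    · simp [ofSubtype_apply_of_mem, ofSubtype_apply_of_not_mem, hx, σ]
    · simp [ofSubtype_apply_of_mem, ofSubtype_apply_of_not_mem, hx, hs, τ]
  have hdisj : Disjoint (ofSubtype σ) (ofSubtype τ) := fun x => by
    by_cases hx : x ∈ s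
    · exact Or.inr (ofSubtype_apply_of_not_mem τ (not_not.mpr hx))
    · exact Or.inl (ofSubtype_apply_of_not_mem σ hx)
  have hct : g.cycleType = σ.cycleType + τ.cycleType := by
    rw [hg, hdisj.cycleType_mul, cycleType_ofSubtype, cycleType_ofSubtype]
  have hσ := σ.sum_cycleType_le
  have hτ := τ.sum_cycleType_le
  have hs_card : Fintype.card {x // x ∈ s} = #s := Fintype.card_coe s
  have hsc_card : Fintype.card {x // x ∉ s} = Fintype.card α - #s := by
    rw [Fintype.card_subtype_compl, hs_card]
  have hsα := s.card_le_univ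
  rw [parts_partition, parts_partition, ← sum_cycleType, ← sum_cycleType, hct, Multiset.sum_add]
  refine add_le_add (Multiset.le_add_right _ _) (Multiset.replicate_le_replicate _ |>.mpr ?_)
  omega

theorem exists_le_parts_partition_sum_eq_card (g : Perm α) {s : Finset α}
    (hs : ∀ x, g x ∈ s ↔ x ∈ s) :
    ∃ S ≤ g.partition.parts, S.sum = #s ∧ ∀ n ∈ S, ∃ x ∈ s, (g ^ n) x = x := by
  refine ⟨_, parts_partition_subtypePerm_le g hs, ?_, fun n hn => ?_⟩
  · rw [Nat.Partition.parts_sum, Fintype.card_coe]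
  · obtain ⟨⟨x, hx⟩, hfix⟩ := exists_pow_apply_eq_self_of_mem_parts_partition hn
    exact ⟨x, hx, by simpa [subtypePerm_pow, Subtype.ext_iff] using hfix⟩

end Partition

section Translates

noncomputable def translatesUnion (g : Perm α) (B : Finset α) : Finset α :=
  (range (period g B)).biUnion fun i => g ^ i • B

variable {g : Perm α} {B : Finset α}

theorem disjoint_pow_smul_of_lt_period
    (hB : ∀ k : ℕ, g ^ k • B = B ∨ _root_.Disjoint (g ^ k • B) B)
    {i j : ℕ} (hij : i < j) (hj : j < period g B) :
    _root_.Disjoint (g ^ i • B) (g ^ j • B) := by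
  have hne : g ^ (j - i) • B ≠ B := pow_smul_ne_of_lt_period (by omega) (by omega)
  have hsplit : g ^ j • B = g ^ i • g ^ (j - i) • B := by
    rw [smul_smul, ← pow_add, Nat.add_sub_cancel' hij.le]
  rw [hsplit, ← disjoint_coe, coe_smul_finset, coe_smul_finset, Set.disjoint_smul_set,
    disjoint_coe]
  exact ((hB (j - i)).resolve_left hne).symm

theorem card_translatesUnion
    (hB : ∀ k : ℕ, g ^ k • B = B ∨ _root_.Disjoint (g ^ k • B) B) :
    #(translatesUnion g B) = period g B * #B := by
  rw [translatesUnion, card_biUnion]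
  · simp [card_smul_finset]
  · intro i hi j hj hij
    rcases lt_or_gt_of_ne hij with h | h
    · exact disjoint_pow_smul_of_lt_period hB h (mem_range.mp hj)
    · exact (disjoint_pow_smul_of_lt_period hB h (mem_range.mp hi)).symm

variable [Fintype α]

theorem mem_translatesUnion_iff {x : α} :
    x ∈ translatesUnion g B ↔ ∃ k : ℕ, x ∈ g ^ k • B := by
  simp only [translatesUnion, mem_biUnion, mem_range]
  refine ⟨fun ⟨i, _, hi⟩ => ⟨i, hi⟩, fun ⟨k, hk⟩ => ⟨k % period g B, ?_, ?_⟩⟩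
  · exact Nat.mod_lt _ (period_pos_of_orderOf_pos (orderOf_pos g) B)
  · rwa [pow_mod_period_smul]

theorem apply_mem_translatesUnion_iff (x : α) :
    g x ∈ translatesUnion g B ↔ x ∈ translatesUnion g B := by
  simp only [mem_translatesUnion_iff]
  constructor
  · rintro ⟨k, hk⟩
    have ht := period_pos_of_orderOf_pos (orderOf_pos g) B
    refine ⟨k + period g B - 1, ?_⟩
    rw [← smul_mem_smul_finset_iff g, smul_smul, ← pow_succ', Nat.sub_add_cancel (by omega),
      pow_add_period_smul]
    exact hk
  · rintro ⟨k, hk⟩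
    refine ⟨k + 1, ?_⟩
    rw [pow_succ', mul_smul]
    exact smul_mem_smul_finset hk

theorem period_dvd_of_pow_apply_eq_self
    (hB : ∀ k : ℕ, g ^ k • B = B ∨ _root_.Disjoint (g ^ k • B) B) {x : α}
    (hx : x ∈ translatesUnion g B) {n : ℕ} (hn : (g ^ n) x = x) : period g B ∣ n := by
  obtain ⟨i, hi⟩ := mem_translatesUnion_iff.mp hx
  set y := (g ^ i)⁻¹ • x
  have hyB : y ∈ B := inv_smul_mem_iff.mpr hi
  have hy : g ^ n • y = y := by
    rw [smul_smul, (Commute.pow_pow_self g n i).inv_right.eq, mul_smul, Perm.smul_def (g ^ n) x, hn]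
  rw [← pow_smul_eq_iff_period_dvd]
  refine (hB n).resolve_right fun hdisj => ?_
  exact disjoint_left.mp hdisj (hy ▸ smul_mem_smul_finset hyB) hyB

theorem exists_le_parts_partition_sum_eq_period_mul_card
    (hB : ∀ k : ℕ, g ^ k • B = B ∨ _root_.Disjoint (g ^ k • B) B) :
    ∃ S ≤ g.partition.parts, S.sum = period g B * #B ∧ ∀ n ∈ S, period g B ∣ n := by
  obtain ⟨S, hS, hsum, hfix⟩ :=
    exists_le_parts_partition_sum_eq_card g apply_mem_translatesUnion_iff
  refine ⟨S, hS, hsum.trans (card_translatesUnion hB), fun n hn => ?_⟩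
  obtain ⟨x, hx, hxn⟩ := hfix n hn
  exact period_dvd_of_pow_apply_eq_self hB hx hxn

end Translates

end Equiv.Perm

theorem eq_one_or_eq_of_dvd_of_sum_eq_mul {d c b t : ℕ} {S : Multiset ℕ} (hd : Odd d)
    (hgcd : Nat.gcd d c = 1) (hdc : 2 * c < d) (hbd : b ∣ d) (ht : 0 < t)
    (hS : S ≤ {d - 2 * c, c, c}) (hsum : S.sum = t * b) (htS : ∀ n ∈ S, t ∣ n) :
    b = 1 ∨ b = d := by
  have hb : 0 < b := Nat.pos_of_dvd_of_pos hbd hd.pos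
  have hc : b ∣ c → b = 1 := fun h => Nat.eq_one_of_dvd_one (hgcd ▸ Nat.dvd_gcd hbd h)
  have h2c : b ∣ 2 * c → b = 1 := fun h =>
    hc ((Nat.coprime_two_right.mpr (hd.of_dvd_nat hbd)).dvd_of_dvd_mul_left h)
  obtain ⟨a, rfl⟩ : ∃ a, d = a + 2 * c := ⟨d - 2 * c, by omega⟩
  have ha : b ∣ a → b = 1 := fun h => h2c (by simpa using Nat.dvd_sub hbd h)
  have hac : b ∣ a + c → b = 1 := fun h =>
    hc (by simpa [show a + 2 * c - (a + c) = c by omega] using Nat.dvd_sub hbd h)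
  rw [← Multiset.mem_powerset] at hS
  simp only [add_tsub_cancel_right, Multiset.insert_eq_cons, Multiset.powerset_cons,
    Multiset.map_add, Multiset.map_map, Function.comp_apply, Multiset.mem_add,
    Multiset.mem_powerset, Multiset.le_singleton, Multiset.mem_map, exists_eq_or_imp,
    Multiset.cons_zero, exists_eq_left] at hS
  rcases hS with ((rfl | rfl) | rfl | rfl) | (rfl | rfl) | rfl | rfl <;>
    simp only [Multiset.sum_zero, zero_eq_mul, Multiset.notMem_zero, IsEmpty.forall_iff,
      implies_true, Multiset.sum_singleton, Multiset.mem_singleton, forall_eq, Multiset.sum_cons,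
      Multiset.mem_cons, or_self, forall_eq_or_imp] at hsum htS
  · omega
  · exact .inl (hc (Dvd.intro_left t hsum.symm))
  · exact .inl (hc (Dvd.intro_left t hsum.symm))
  · exact .inl (h2c (two_mul c ▸ Dvd.intro_left t hsum.symm))
  · exact .inl (ha (Dvd.intro_left t hsum.symm))
  · exact .inl (hac (Dvd.intro_left t hsum.symm))
  · exact .inl (hac (Dvd.intro_left t hsum.symm))
  · have ht1 : t ∣ 1 := hgcd ▸ Nat.dvd_gcd (Nat.dvd_add htS.1 (htS.2.mul_left 2)) htS.2
    rw [Nat.dvd_one] at ht1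
    subst ht1
    omega

section Blocks

variable {Ω : Type*} {G : Subgroup (Perm Ω)} {Λ : Set Ω}

theorem SubgroupTransitive.isPretransitive (h : SubgroupTransitive G) : IsPretransitive G Ω :=
  ⟨fun x y => let ⟨g, hg, hgxy⟩ := h x y; ⟨⟨g, hg⟩, hgxy⟩⟩

theorem IsBlockOf.isBlock (h : IsBlockOf G Λ) : IsBlock G Λ :=
  isBlock_iff_smul_eq_or_disjoint.mpr fun g => h.2 g g.2

theorem IsBlockOf.ncard_dvd_card (htrans : SubgroupTransitive G) (h : IsBlockOf G Λ) :
    Λ.ncard ∣ Nat.card Ω :=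
  have := htrans.isPretransitive
  h.isBlock.ncard_dvd_card h.1

theorem IsBlockOf.pow_smul_toFinset [Fintype Ω] [DecidableEq Ω] [Fintype Λ] (h : IsBlockOf G Λ)
    {g : Perm Ω} (hg : g ∈ G) (k : ℕ) :
    g ^ k • Λ.toFinset = Λ.toFinset ∨ Disjoint (g ^ k • Λ.toFinset) Λ.toFinset := by
  rw [← coe_inj, ← disjoint_coe, coe_smul_finset, Set.coe_toFinset]
  exact h.2 (g ^ k) (pow_mem hg k)

end Blocks

theorem statement_0_general {Ω : Type*} [Fintype Ω] [DecidableEq Ω] (d c : ℕ)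
    (hcard : Fintype.card Ω = d) (hd : Odd d)
    (hgcd : Nat.gcd d c = 1) (hdc : 2 * c < d)
    (G : Subgroup (Equiv.Perm Ω)) (htrans : SubgroupTransitive G)
    (hg : ∃ g ∈ G, fullCycleType g = ({d - 2 * c, c, c} : Multiset ℕ)) :
    SubgroupPrimitive G := by
  classical
  refine ⟨htrans, fun Λ hΛ => ?_⟩
  obtain ⟨g, hgG, hg⟩ := hg
  have hparts : g.partition.parts = {d - 2 * c, c, c} := hg
  have hbd : #Λ.toFinset ∣ d := by
    rw [← hcard, ← Nat.card_eq_fintype_card, ← Set.ncard_eq_toFinset_card']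
    exact hΛ.ncard_dvd_card htrans
  obtain ⟨S, hS, hsum, hdvd⟩ :=
    Perm.exists_le_parts_partition_sum_eq_period_mul_card (hΛ.pow_smul_toFinset hgG)
  rcases eq_one_or_eq_of_dvd_of_sum_eq_mul hd hgcd hdc hbd
      (period_pos_of_orderOf_pos (orderOf_pos g) _) (hparts ▸ hS) hsum hdvd with h | h
  · obtain ⟨x, hx⟩ := card_eq_one.mp h
    exact .inl ⟨x, by rw [← Set.coe_toFinset Λ, hx, coe_singleton]⟩
  · exact .inr (Set.toFinset_eq_univ.mp (eq_univ_of_card _ (h.trans hcard.symm)))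

/-- A transitive permutation group of odd degree `d` containing a permutation
with cycle type `[d-2c, c, c]`, where `gcd(d,c) = 1` and `d - 2c ≥ 1`, is primitive. -/
theorem statement_0 {Ω : Type*} [Fintype Ω] [DecidableEq Ω] (d c : ℕ)
    (hcard : Fintype.card Ω = d) (hd : Odd d) (hdpos : 0 < d) (hcpos : 0 < c)
    (hgcd : Nat.gcd d c = 1) (hdc : 2 * c < d)
    (G : Subgroup (Equiv.Perm Ω)) (htrans : SubgroupTransitive G)
    (hg : ∃ g ∈ G, fullCycleType g = ({d - 2 * c, c, c} : Multiset ℕ)) :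
    SubgroupPrimitive G :=
  statement_0_general d c hcard hd hgcd hdc G htrans hg
end

section
/- Let ε be a p-cycle and δ a q-cycle in the symmetric group on a set Ω, and suppose the cardinality of Supp(ε) ∩ Supp(δ) is z > 1. Then the support of ε meets at most z cycles of the product εδ; that is, the number of orbits of the cyclic group ⟨εδ⟩ on Ω that intersect Supp(ε) is at most z. -/
/-!
Let `Z = Supp ε ∩ Supp δ`. Starting from a point of `Supp ε`, the powers of `εδ` agree with
those of `ε` until the orbit first enters `Supp δ`; since `ε` is a cycle through a point of `Z`,
this happens, and at that moment the point lies in `Z`. Hence every cycle of `εδ` meeting `Supp ε`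
meets `Z`, and there are at most `|Z| = z` of them.
-/

lemma orbSet_eq_of_mem {Ω : Type*} (G : Subgroup (Equiv.Perm Ω)) {x w : Ω}
    (h : x ∈ orbSet G w) : orbSet G x = orbSet G w := by
  obtain ⟨g, hg, rfl⟩ := h
  ext y
  constructor
  · rintro ⟨h, hh, rfl⟩
    exact ⟨h * g, G.mul_mem hh hg, rfl⟩
  · rintro ⟨h, hh, rfl⟩
    exact ⟨h * g⁻¹, G.mul_mem hh (G.inv_mem hg), by simp [Equiv.Perm.mul_apply]⟩

lemma ncard_orbits_meeting_le_of_forall_exists_mem {Ω : Type*} (G : Subgroup (Equiv.Perm Ω))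
    {A Z : Set Ω} (hZ : Z.Finite) (hAZ : ∀ x ∈ A, ∃ g ∈ G, g x ∈ Z) :
    Set.ncard {S : Set Ω | S ∈ Set.range (orbSet G) ∧ (S ∩ A).Nonempty} ≤ Z.ncard := by
  have hsub : {S : Set Ω | S ∈ Set.range (orbSet G) ∧ (S ∩ A).Nonempty} ⊆ orbSet G '' Z := by
    rintro _ ⟨⟨w, rfl⟩, x, hxS, hxA⟩
    obtain ⟨g, hg, hgx⟩ := hAZ x hxA
    refine ⟨g x, hgx, ?_⟩
    rw [orbSet_eq_of_mem G ⟨g, hg, rfl⟩, orbSet_eq_of_mem G hxS]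
  calc _ ≤ (orbSet G '' Z).ncard := Set.ncard_le_ncard hsub (hZ.image _)
    _ ≤ Z.ncard := Set.ncard_image_le hZ

namespace Equiv.Perm

variable {Ω : Type*} [Fintype Ω] [DecidableEq Ω]

lemma mul_pow_apply_eq_pow_apply_of_forall_lt {ε δ : Perm Ω} {x : Ω} {k : ℕ}
    (h : ∀ j < k, (ε ^ j) x ∉ δ.support) : ((ε * δ) ^ k) x = (ε ^ k) x := by
  induction k with
  | zero => rfl
  | succ k ih =>
    have hfix : δ ((ε ^ k) x) = (ε ^ k) x := notMem_support.1 (h k k.lt_succ_self)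
    rw [pow_succ', mul_apply, ih fun j hj => h j (hj.trans k.lt_succ_self), mul_apply, hfix,
      pow_succ', mul_apply]

lemma IsCycle.exists_mul_pow_apply_mem_support_inter {ε δ : Perm Ω} (hε : ε.IsCycle)
    (hεδ : (ε.support ∩ δ.support).Nonempty) {x : Ω} (hx : x ∈ ε.support) :
    ∃ n : ℕ, ((ε * δ) ^ n) x ∈ ε.support ∩ δ.support := by
  obtain ⟨t, ht⟩ := hεδ
  obtain ⟨htε, htδ⟩ := Finset.mem_inter.1 ht
  obtain ⟨i, -, hi⟩ := (hε.sameCycle (mem_support.1 hx) (mem_support.1 htε)).exists_pow_eq'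
  have hreach : ∃ k : ℕ, (ε ^ k) x ∈ δ.support := ⟨i, hi ▸ htδ⟩
  classical
  refine ⟨Nat.find hreach, ?_⟩
  rw [mul_pow_apply_eq_pow_apply_of_forall_lt fun j hj => Nat.find_min hreach hj]
  exact Finset.mem_inter.2 ⟨pow_apply_mem_support.2 hx, Nat.find_spec hreach⟩

end Equiv.Perm

theorem statement_11_general {Ω : Type*} [Fintype Ω] [DecidableEq Ω]
    (z : ℕ) (ε δ : Equiv.Perm Ω)
    (hε : ε.IsCycle)
    (hz : (ε.support ∩ δ.support).card = z) (hz1 : 1 < z) :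
    Set.ncard {S : Set Ω | S ∈ Set.range (orbSet (Subgroup.zpowers (ε * δ))) ∧
      (S ∩ (ε.support : Set Ω)).Nonempty} ≤ z := by
  have hεδ : (ε.support ∩ δ.support).Nonempty := Finset.card_pos.1 (by omega)
  have hreach : ∀ x ∈ (ε.support : Set Ω),
      ∃ g ∈ Subgroup.zpowers (ε * δ), g x ∈ (↑(ε.support ∩ δ.support) : Set Ω) := by
    intro x hx
    obtain ⟨n, hn⟩ := hε.exists_mul_pow_apply_mem_support_inter hεδ hx
    exact ⟨_, Subgroup.npow_mem_zpowers _ n, hn⟩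
  calc _ ≤ (↑(ε.support ∩ δ.support) : Set Ω).ncard :=
        ncard_orbits_meeting_le_of_forall_exists_mem _ (Finset.finite_toSet _) hreach
    _ = z := by rw [Set.ncard_coe_finset, hz]

/-- If `ε` is a `p`-cycle, `δ` a `q`-cycle and `|Supp ε ∩ Supp δ| = z > 1`,
then the support of `ε` meets at most `z` cycles (orbits of `⟨εδ⟩`) of `εδ`. -/
theorem statement_11 {Ω : Type*} [Fintype Ω] [DecidableEq Ω]
    (p q z : ℕ) (ε δ : Equiv.Perm Ω)
    (hε : ε.IsCycle) (hεp : ε.support.card = p)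
    (hδ : δ.IsCycle) (hδq : δ.support.card = q)
    (hz : (ε.support ∩ δ.support).card = z) (hz1 : 1 < z) :
    Set.ncard {S : Set Ω | S ∈ Set.range (orbSet (Subgroup.zpowers (ε * δ))) ∧
      (S ∩ (ε.support : Set Ω)).Nonempty} ≤ z :=
  statement_11_general z ε δ hε hz hz1
end

section
/- Let d be an odd positive integer and let 𝒟 = {D₁, D₂} be partitions of d with ν(D₁) + ν(D₂) = d − 1 and gcd(D₁) ≠ 1. Let α ∈ D₁ and β ∈ D₂ be permutations of a d-element set such that ⟨α, β⟩ has exactly t orbits, and suppose there exists a permutation ω with ω² = αβ such that ⟨α, β, ω⟩ is transitive. Then αβ is the product of exactly 2t − 1 disjoint cycles; that is, the number of orbits of ⟨αβ⟩ on the d points (counting fixed points as trivial cycles) equals 2t − 1. -/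
/-!
Write `c(σ)` for the number of cycles of `σ`. Ree's inequality
`c(α) + c(β) + c(αβ) ≤ d + 2t` follows by writing `α`, `β` and `(αβ)⁻¹` as products of
`d - c(·)` transpositions and following how each transposition changes the numbers of cycles and
of orbits. Since `c(α) + c(β) = 2d - ν(D₁) - ν(D₂) = d + 1`, it gives `c(αβ) ≤ 2t - 1`.

Conversely, `αβ = ω²`, so every cycle of `ω` is the union of at most two cycles of `αβ`, each inside
an orbit of `⟨α, β⟩`. As `⟨α, β, ω⟩` is transitive, at least `t - 1` cycles of `ω` meet two
orbits, whence `c(αβ) ≥ 2(t - 1)`. Finally `sign(αβ) = sign(ω)² = 1` and `d` is odd, so `c(αβ)`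
is odd and therefore at least `2t - 1`.
-/

open Equiv Equiv.Perm MulAction

namespace Setoid

variable {V : Type*}

theorem card_quotient_bot : Nat.card (Quotient (⊥ : Setoid V)) = Nat.card V :=
  Nat.card_congr quotientBotEquiv

/-- The finest equivalence relation coarser than `s` that relates `a` and `b`. -/
def mergeAt (s : Setoid V) (a b : V) : Setoid V where
  r x y := s x y ∨ (s x a ∧ s b y) ∨ (s x b ∧ s a y)
  iseqv := by
    refine ⟨fun x => .inl (s.refl x), ?_, ?_⟩
    · rintro x y (h | ⟨h₁, h₂⟩ | ⟨h₁, h₂⟩)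
      exacts [.inl (s.symm h), .inr (.inr ⟨s.symm h₂, s.symm h₁⟩),
        .inr (.inl ⟨s.symm h₂, s.symm h₁⟩)]
    · rintro x y z (h | ⟨h₁, h₂⟩ | ⟨h₁, h₂⟩) (h' | ⟨h₁', h₂'⟩ | ⟨h₁', h₂'⟩)
      exacts [.inl (s.trans h h'), .inr (.inl ⟨s.trans h h₁', h₂'⟩),
        .inr (.inr ⟨s.trans h h₁', h₂'⟩), .inr (.inl ⟨h₁, s.trans h₂ h'⟩),
        .inl (s.trans h₁ (s.trans (s.symm (s.trans h₂ h₁')) h₂')), .inl (s.trans h₁ h₂'),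
        .inr (.inr ⟨h₁, s.trans h₂ h'⟩), .inl (s.trans h₁ h₂'),
        .inl (s.trans h₁ (s.trans (s.symm h₁') (s.trans (s.symm h₂) h₂')))]

theorem le_mergeAt (s : Setoid V) (a b : V) : s ≤ s.mergeAt a b := fun _ _ h => .inl h

theorem mergeAt_rel (s : Setoid V) (a b : V) : s.mergeAt a b a b :=
  .inr (.inl ⟨s.refl a, s.refl b⟩)

theorem mergeAt_le_of_rel {s : Setoid V} {a b : V} (h : s a b) : s.mergeAt a b ≤ s := by
  rintro x y (h' | ⟨h₁, h₂⟩ | ⟨h₁, h₂⟩)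
  exacts [h', s.trans h₁ (s.trans h h₂), s.trans h₁ (s.trans (s.symm h) h₂)]

theorem mergeAt_swap_apply [DecidableEq V] (t : Setoid V) (a b x : V) :
    t.mergeAt a b x (swap a b x) := by
  rcases eq_or_ne x a with rfl | hxa
  · rw [swap_apply_left]; exact t.mergeAt_rel x b
  rcases eq_or_ne x b with rfl | hxb
  · rw [swap_apply_right]; exact (t.mergeAt a x).symm (t.mergeAt_rel a x)
  · rw [swap_apply_of_ne_of_ne hxa hxb]

variable [Finite V]

theorem card_quotient_le_of_le {s t : Setoid V} (h : s ≤ t) :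
    Nat.card (Quotient t) ≤ Nat.card (Quotient s) :=
  Nat.card_le_card_of_surjective (map_of_le h) (Quotient.ind fun x => ⟨⟦x⟧, rfl⟩)

theorem card_quotient_lt_of_le {s t : Setoid V} (h : s ≤ t) {a b : V} (hs : ¬ s a b)
    (ht : t a b) : Nat.card (Quotient t) < Nat.card (Quotient s) := by
  have := Fintype.ofFinite (Quotient s)
  have := Fintype.ofFinite (Quotient t)
  simp only [Nat.card_eq_fintype_card]
  refine Fintype.card_lt_of_surjective_not_injective (map_of_le h)
    (Quotient.ind fun x => ⟨⟦x⟧, rfl⟩) fun hinj => hs (Quotient.exact (@hinj ⟦a⟧ ⟦b⟧ ?_))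
  exact Quotient.sound ht

/-- Classes of `s` other than that of `b` survive in `s.mergeAt a b`. -/
theorem card_quotient_le_mergeAt_add_one (s : Setoid V) (a b : V) :
    Nat.card (Quotient s) ≤ Nat.card (Quotient (s.mergeAt a b)) + 1 := by
  classical
  let f : Quotient s → Option (Quotient (s.mergeAt a b)) :=
    Quotient.lift (fun x => if s x b then none else some ⟦x⟧) fun x y hxy => by
      by_cases hx : s x b
      · rw [if_pos hx, if_pos (s.trans (s.symm hxy) hx)]
      · rw [if_neg hx, if_neg fun hy => hx (s.trans hxy hy)]
        exact congrArg some (Quotient.sound (.inl hxy))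
  have hf : Function.Injective f := by
    rintro ⟨x⟩ ⟨y⟩ h
    change (if s x b then _ else _) = (if s y b then _ else _) at h
    by_cases hx : s x b <;> by_cases hy : s y b <;> simp only [hx, hy, if_true, if_false,
      reduceCtorEq, Option.some_inj] at h
    · exact Quotient.sound (s.trans hx (s.symm hy))
    · rcases Quotient.exact h with h' | ⟨-, h'⟩ | ⟨h', -⟩
      exacts [Quotient.sound h', absurd (s.symm h') hy, absurd h' hx]
  simpa using Nat.card_le_card_of_injective f hf

theorem card_quotient_le_sup_eqvGen_add_card [DecidableEq V] (s : Setoid V)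
    (F : Finset (V × V)) :
    Nat.card (Quotient s) ≤
      Nat.card (Quotient (s ⊔ Relation.EqvGen.setoid fun x y => (x, y) ∈ F)) + F.card := by
  induction F using Finset.induction_on with
  | empty =>
    refine card_quotient_le_of_le (sup_le le_rfl (eqvGen_le ?_))
    simp
  | insert p F hp ih =>
    set t := s ⊔ Relation.EqvGen.setoid fun x y => (x, y) ∈ F
    have hle :
        (s ⊔ Relation.EqvGen.setoid fun x y => (x, y) ∈ insert p F) ≤ t.mergeAt p.1 p.2 := by
      refine sup_le ((le_sup_left : s ≤ t).trans (t.le_mergeAt _ _)) (eqvGen_le ?_)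
      rintro x y hxy
      rcases Finset.mem_insert.mp hxy with rfl | hxy
      · exact t.mergeAt_rel _ _
      · exact t.le_mergeAt _ _ (le_sup_right (a := s) (Relation.EqvGen.rel _ _ hxy))
    have := card_quotient_le_of_le hle
    have := card_quotient_le_mergeAt_add_one t p.1 p.2
    rw [Finset.card_insert_of_notMem hp]
    omega

end Setoid

theorem nu_add_card {D : Multiset ℕ} (h : ∀ x ∈ D, 0 < x) : nu D + Multiset.card D = D.sum := by
  calc nu D + Multiset.card D = (D.map fun x => x - 1 + 1).sum := by
        rw [Multiset.sum_map_add, Multiset.map_const', Multiset.sum_replicate, smul_eq_mul,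
          mul_one, nu]
    _ = D.sum := by
        rw [Multiset.map_congr rfl fun x hx => Nat.sub_add_cancel (h x hx), Multiset.map_id']

section Orbits

variable {Ω : Type*}

theorem numOrbits_eq_card_quotient (G : Subgroup (Perm Ω)) :
    numOrbits G = Nat.card (Quotient (orbitRel G Ω)) := by
  have horb : orbSet G = orbit G := by
    ext x y
    simp [orbSet, mem_orbit_iff, Subgroup.smul_def, Perm.smul_def]
  have hrange :
      Set.range (orbSet G) = Set.range (orbitRel.Quotient.orbit (G := G) (α := Ω)) := by
    rw [horb]
    ext S
    exact ⟨fun ⟨x, hx⟩ => ⟨⟦x⟧, hx⟩, fun ⟨q, hq⟩ => q.inductionOn (fun x hx => ⟨x, hx⟩) hq⟩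
  rw [numOrbits, hrange, Nat.card_range_of_injective orbitRel.Quotient.orbit_injective]

theorem SubgroupTransitive.mono {G G' : Subgroup (Perm Ω)} (hG : G ≤ G')
    (h : SubgroupTransitive G) : SubgroupTransitive G' := fun x y =>
  let ⟨g, hg, hgx⟩ := h x y
  ⟨g, hG hg, hgx⟩

theorem orbitRel_closure_le {S : Set (Perm Ω)} {t : Setoid Ω} (h : ∀ g ∈ S, ∀ x, t x (g x)) :
    orbitRel (Subgroup.closure S) Ω ≤ t := by
  have key : ∀ g ∈ Subgroup.closure S, ∀ x, t x (g x) := by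
    intro g hg
    induction hg using Subgroup.closure_induction with
    | mem g hg => exact h g hg
    | one => exact t.refl
    | mul g₁ g₂ _ _ h₁ h₂ => exact fun x => t.trans (h₂ x) (h₁ (g₂ x))
    | inv g _ hg => exact fun x => t.symm (by simpa using hg (g⁻¹ x))
  rintro _ x ⟨⟨g, hg⟩, rfl⟩
  exact t.symm (key g hg x)

theorem orbitRel_mono {H G : Subgroup (Perm Ω)} (h : H ≤ G) :
    orbitRel H Ω ≤ orbitRel G Ω := by
  rintro _ x ⟨⟨g, hg⟩, rfl⟩
  exact ⟨⟨g, h hg⟩, rfl⟩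

theorem orbitRel_apply_self {G : Subgroup (Perm Ω)} {g : Perm Ω} (hg : g ∈ G) (x : Ω) :
    orbitRel G Ω x (g x) :=
  ⟨⟨g⁻¹, G.inv_mem hg⟩, by simp [Subgroup.smul_def, Perm.smul_def]⟩

theorem orbitRel_zpowers (σ : Perm Ω) : orbitRel (Subgroup.zpowers σ) Ω = SameCycle.setoid σ := by
  ext x y
  simp only [orbitRel_apply, mem_orbit_iff, Subtype.exists, Subgroup.mem_zpowers_iff]
  exact ⟨fun ⟨_, ⟨k, hk⟩, h⟩ => SameCycle.symm (⟨k, hk ▸ h⟩ : σ.SameCycle y x),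
    fun h => let ⟨k, hk⟩ := h.symm; ⟨_, ⟨k, rfl⟩, hk⟩⟩

theorem orbitRel_of_sameCycle {G : Subgroup (Perm Ω)} {σ : Perm Ω} (hσ : σ ∈ G) {x y : Ω}
    (h : σ.SameCycle x y) : orbitRel G Ω x y :=
  orbitRel_mono (Subgroup.zpowers_le.mpr hσ) ((orbitRel_zpowers σ).symm ▸ h)

/-- The number of cycles of `σ`, fixed points included. -/
noncomputable def cycleCount (σ : Perm Ω) : ℕ := Nat.card (Quotient (SameCycle.setoid σ))

theorem cycleCount_inv (σ : Perm Ω) : cycleCount σ⁻¹ = cycleCount σ := by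
  have h : SameCycle.setoid σ⁻¹ = SameCycle.setoid σ := Setoid.ext fun _ _ => sameCycle_inv
  rw [cycleCount, cycleCount, h]

theorem numOrbits_zpowers (σ : Perm Ω) : numOrbits (Subgroup.zpowers σ) = cycleCount σ := by
  rw [numOrbits_eq_card_quotient, orbitRel_zpowers, cycleCount]

theorem sameCycle_sq_or_sameCycle_sq_apply {ω : Perm Ω} {x y : Ω} (h : ω.SameCycle x y) :
    (ω ^ 2).SameCycle x y ∨ (ω ^ 2).SameCycle (ω x) y := by
  obtain ⟨k, rfl⟩ := h
  rcases Int.even_or_odd' k with ⟨m, rfl | rfl⟩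
  · exact .inl ⟨m, by rw [← zpow_natCast, ← zpow_mul]; rfl⟩
  · exact .inr ⟨m, by rw [← zpow_natCast, ← zpow_mul, zpow_add_one]; rfl⟩

/-- Because `σ = (σ * swap a b) * swap a b`. -/
theorem sameCycle_setoid_le_mergeAt_mul_swap [DecidableEq Ω] (σ : Perm Ω) (a b : Ω) :
    SameCycle.setoid σ ≤ (SameCycle.setoid (σ * swap a b)).mergeAt a b := by
  rw [← orbitRel_zpowers, Subgroup.zpowers_eq_closure]
  refine orbitRel_closure_le fun _ h x => ?_
  rw [Set.mem_singleton_iff.mp h]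
  refine Setoid.trans' _ (Setoid.mergeAt_swap_apply _ a b x) (Setoid.le_mergeAt _ a b ?_)
  exact ⟨1, by simp⟩

end Orbits

section CycleCount

variable {Ω : Type*} [Fintype Ω]

theorem cycleCount_le_card (σ : Perm Ω) : cycleCount σ ≤ Fintype.card Ω := by
  have := Setoid.card_quotient_le_of_le (bot_le : ⊥ ≤ SameCycle.setoid σ)
  rwa [Setoid.card_quotient_bot, Nat.card_eq_fintype_card (α := Ω)] at this

variable [DecidableEq Ω]

/-- A cycle of `σ` is a fixed point or the support of a cycle factor of `σ`. -/
theorem cycleCount_eq_card_fullCycleType (σ : Perm Ω) :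
    cycleCount σ = Multiset.card (fullCycleType σ) := by
  let f : Ω → {x // x ∉ σ.support} ⊕ σ.cycleFactorsFinset := fun x =>
    if h : x ∈ σ.support then .inr ⟨σ.cycleOf x, cycleOf_mem_cycleFactorsFinset_iff.mpr h⟩
    else .inl ⟨x, h⟩
  have hker (x y : Ω) : σ.SameCycle x y ↔ f x = f y := by
    by_cases hx : x ∈ σ.support <;> by_cases hy : y ∈ σ.support <;>
      simp only [f, hx, hy, dite_true, dite_false, reduceCtorEq, iff_false, Sum.inr.injEq,
        Sum.inl.injEq, Subtype.mk.injEq]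
    · refine ⟨SameCycle.cycleOf_eq, fun h => ?_⟩
      have : y ∈ (σ.cycleOf x).support := h ▸ mem_support_cycleOf_iff.mpr ⟨.refl _ _, hy⟩
      exact (mem_support_cycleOf_iff.mp this).1
    · exact fun h => hy (h.mem_support_iff.mp hx)
    · exact fun h => hx (h.mem_support_iff.mpr hy)
    · exact ⟨fun h => h.eq_of_left (notMem_support.mp hx), fun h => h ▸ .refl _ _⟩
  have hf : Function.Surjective f := by
    rintro (⟨x, hx⟩ | ⟨c, hc⟩)
    · exact ⟨x, dif_neg hx⟩
    · obtain ⟨x, hx⟩ := (mem_cycleFactorsFinset_iff.mp hc).1.nonempty_support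
      refine ⟨x, ?_⟩
      simp only [f, dif_pos (mem_cycleFactorsFinset_support_le hc hx), cycle_is_cycleOf hx hc]
  rw [cycleCount, Nat.card_congr ((Quotient.congrRight hker).trans
    (Setoid.quotientKerEquivOfSurjective f hf)), Nat.card_sum, Nat.card_eq_fintype_card,
    Fintype.card_subtype_compl, Fintype.card_coe, fullCycleType, Multiset.card_add,
    Multiset.card_replicate, cycleType_def, Multiset.card_map, Nat.card_eq_fintype_card,
    Fintype.card_coe, Finset.card_val, add_comm]

theorem cycleCount_add_nu_fullCycleType (σ : Perm Ω) :
    cycleCount σ + nu (fullCycleType σ) = Fintype.card Ω := by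
  rw [cycleCount_eq_card_fullCycleType, add_comm]
  exact (nu_add_card fun _ => σ.partition.parts_pos).trans σ.partition.parts_sum

theorem cycleCount_one : cycleCount (1 : Perm Ω) = Fintype.card Ω := by
  simp [cycleCount_eq_card_fullCycleType, fullCycleType]

theorem sign_eq_neg_one_pow_cycleCount (σ : Perm Ω) :
    sign σ = (-1) ^ (Fintype.card Ω + cycleCount σ) := by
  have hsupp := σ.support.card_le_univ
  rw [sign_of_cycleType, sum_cycleType, cycleCount_eq_card_fullCycleType, fullCycleType,
    Multiset.card_add, Multiset.card_replicate,
    show Fintype.card Ω + (σ.cycleType.card + (Fintype.card Ω - σ.support.card)) =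
      σ.support.card + σ.cycleType.card + 2 * (Fintype.card Ω - σ.support.card) by omega,
    pow_add _ (_ + _), pow_mul, Int.units_sq, one_pow, mul_one]

theorem cycleCount_mul_swap_le (σ : Perm Ω) (a b : Ω) :
    cycleCount (σ * swap a b) ≤ cycleCount σ + 1 :=
  (Setoid.card_quotient_le_mergeAt_add_one _ a b).trans
    (Nat.add_le_add_right (Setoid.card_quotient_le_of_le
      (sameCycle_setoid_le_mergeAt_mul_swap σ a b)) 1)

theorem cycleCount_mul_swap_ne (σ : Perm Ω) {a b : Ω} (hab : a ≠ b) :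
    cycleCount (σ * swap a b) ≠ cycleCount σ := fun h => by
  have := sign_eq_neg_one_pow_cycleCount (σ * swap a b)
  rw [h, ← sign_eq_neg_one_pow_cycleCount, Perm.sign_mul, sign_swap hab, mul_neg_one] at this
  exact units_ne_neg_self _ this.symm

theorem cycleCount_mul_swap_lt {σ : Perm Ω} {a b : Ω} (h : ¬ σ.SameCycle a b) :
    cycleCount (σ * swap a b) < cycleCount σ := by
  have hab : a ≠ b := fun hab => h (hab ▸ .refl σ a)
  have := Setoid.card_quotient_lt_of_le (sameCycle_setoid_le_mergeAt_mul_swap σ a b) h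
    (Setoid.mergeAt_rel _ a b)
  have := Setoid.card_quotient_le_mergeAt_add_one (SameCycle.setoid (σ * swap a b)) a b
  have := cycleCount_mul_swap_ne σ hab
  simp only [cycleCount] at *
  omega

theorem exists_isSwap_list_prod_eq (σ : Perm Ω) :
    ∃ L : List (Perm Ω), (∀ τ ∈ L, τ.IsSwap) ∧ L.prod = σ ∧
      L.length + cycleCount σ ≤ Fintype.card Ω := by
  induction hn : Fintype.card Ω - cycleCount σ using Nat.strong_induction_on generalizing σ with
  | _ n ih =>
  by_cases hσ : σ = 1
  · exact ⟨[], by simp, by simp [hσ], by simp [hσ, cycleCount_one]⟩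
  obtain ⟨a, ha⟩ : ∃ a, σ a ≠ a := not_forall.mp fun h => hσ (Equiv.ext h)
  set σ' := σ * swap a (σ a)
  have hσ' : σ' * swap a (σ a) = σ := by simp [σ', mul_assoc]
  have hsplit : ¬ σ'.SameCycle a (σ a) := fun h =>
    ha (h.eq_of_right (by simp [σ', Function.IsFixedPt])).symm
  have hlt := hσ' ▸ cycleCount_mul_swap_lt hsplit
  obtain ⟨L, hL, hprod, hlen⟩ :=
    ih _ (by have := cycleCount_le_card σ'; omega) σ' rfl
  refine ⟨L ++ [swap a (σ a)], ?_, by simp [hprod, hσ'], by simp; omega⟩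
  simpa [or_imp, forall_and] using ⟨hL, a, σ a, ha.symm, rfl⟩

theorem card_add_cycleCount_prod_le (L : List (Perm Ω)) (hL : ∀ τ ∈ L, τ.IsSwap) :
    Fintype.card Ω + cycleCount L.prod ≤
      L.length + 2 * Nat.card (Quotient (orbitRel (Subgroup.closure {g | g ∈ L}) Ω)) := by
  induction L using List.reverseRecOn with
  | nil =>
    have := Setoid.card_quotient_le_of_le
      (orbitRel_closure_le (S := {g | g ∈ ([] : List (Perm Ω))}) (t := ⊥) (by simp))
    rw [Setoid.card_quotient_bot, Nat.card_eq_fintype_card] at this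
    simp only [List.prod_nil, cycleCount_one, List.length_nil]
    omega
  | append_singleton L τ ih =>
    obtain ⟨a, b, hab, rfl⟩ := hL τ (by simp)
    set s := orbitRel (Subgroup.closure {g | g ∈ L}) Ω
    set s' := orbitRel (Subgroup.closure {g | g ∈ L ++ [swap a b]}) Ω
    have hss' : s ≤ s' := orbitRel_mono (Subgroup.closure_mono fun g hg => by simp_all)
    have hs'_le : s' ≤ s.mergeAt a b := by
      refine orbitRel_closure_le fun g hg x => ?_
      rcases List.mem_append.mp hg with hg | hg
      · exact s.le_mergeAt a b (orbitRel_apply_self (Subgroup.subset_closure hg) x)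
      · exact List.mem_singleton.mp hg ▸ s.mergeAt_swap_apply a b x
    have ih := ih fun τ hτ => hL τ (by simp [hτ])
    have hprod : L.prod ∈ Subgroup.closure {g | g ∈ L} :=
      Subgroup.list_prod_mem _ fun g hg => Subgroup.subset_closure hg
    simp only [List.prod_append, List.prod_singleton, List.length_append, List.length_singleton]
    -- A transposition joining two orbits of `L` also joins two cycles of `L.prod`.
    by_cases hrel : s a b
    · have := Setoid.card_quotient_le_of_le (hs'_le.trans (Setoid.mergeAt_le_of_rel hrel))
      have := cycleCount_mul_swap_le L.prod a b
      omega
    · have := Setoid.card_quotient_le_of_le hs'_le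
      have := Setoid.card_quotient_le_mergeAt_add_one s a b
      have := cycleCount_mul_swap_lt fun h => hrel (orbitRel_of_sameCycle hprod h)
      omega

theorem cycleCount_add_cycleCount_add_cycleCount_mul_le (α β : Perm Ω) :
    cycleCount α + cycleCount β + cycleCount (α * β) ≤
      Fintype.card Ω + 2 * Nat.card (Quotient (orbitRel (Subgroup.closure {α, β}) Ω)) := by
  obtain ⟨La, hLa, rfl, hla⟩ := exists_isSwap_list_prod_eq α
  obtain ⟨Lb, hLb, rfl, hlb⟩ := exists_isSwap_list_prod_eq β
  obtain ⟨Lc, hLc, hc, hlc⟩ := exists_isSwap_list_prod_eq (La.prod * Lb.prod)⁻¹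
  have hL := card_add_cycleCount_prod_le (La ++ Lb ++ Lc) (by simp_all [or_imp])
  have hmem : ∀ L ⊆ La ++ Lb ++ Lc, L.prod ∈ Subgroup.closure {g | g ∈ La ++ Lb ++ Lc} :=
    fun L hL => Subgroup.list_prod_mem _ fun g hg => Subgroup.subset_closure (hL hg)
  have horb := Setoid.card_quotient_le_of_le (orbitRel_mono (Subgroup.closure_le _ |>.mpr
    (Set.insert_subset (hmem La (by simp)) (Set.singleton_subset_iff.mpr (hmem Lb (by simp))))))
  rw [List.prod_append, List.prod_append, hc, mul_inv_cancel, cycleCount_one] at hL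
  rw [cycleCount_inv] at hlc
  simp only [List.length_append] at hL
  omega

end CycleCount

section LowerBound

variable {Ω : Type*} [Fintype Ω]

theorem card_mul_two_le_cycleCount_sq {s : Setoid Ω} {ω : Perm Ω}
    (hs : SameCycle.setoid (ω ^ 2) ≤ s) (B : Finset (Quotient (SameCycle.setoid ω)))
    (hB : ∀ w ∈ B, ¬ s w.out (ω w.out)) : B.card * 2 ≤ cycleCount (ω ^ 2) := by
  let P : Quotient (SameCycle.setoid ω) × Bool → Ω := fun p => cond p.2 (ω p.1.out) p.1.out
  have hP : ∀ p, ω.SameCycle p.1.out (P p) := by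
    rintro ⟨w, _ | _⟩
    exacts [.refl _ _, sameCycle_apply_right.mpr (.refl _ _)]
  have hinj : Set.InjOn (fun p => (⟦P p⟧ : Quotient (SameCycle.setoid (ω ^ 2))))
      (B ×ˢ (Finset.univ : Finset Bool) : Finset _) := by
    rintro ⟨w, b⟩ hp ⟨w', b'⟩ - hpq
    have h2 : (ω ^ 2).SameCycle (P (w, b)) (P (w', b')) := Quotient.exact hpq
    obtain rfl : w = w' := by
      simpa using Quotient.sound (s := SameCycle.setoid ω)
        ((hP (w, b)).trans (h2.of_pow.trans (hP (w', b')).symm))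
    have hw := hB w (Finset.mem_product.mp hp).1
    cases b <;> cases b'
    exacts [rfl, (hw (hs h2)).elim, (hw (s.symm' (hs h2))).elim, rfl]
  classical
  have := Finset.card_le_card_of_injOn _ (fun _ _ => Finset.mem_univ _) hinj
  rwa [Finset.card_product, Finset.card_univ, Fintype.card_bool, Finset.card_univ,
    ← Nat.card_eq_fintype_card] at this

variable [DecidableEq Ω]

theorem odd_cycleCount_sq (hodd : Odd (Fintype.card Ω)) (ω : Perm Ω) :
    Odd (cycleCount (ω ^ 2)) := by
  have h := sign_eq_neg_one_pow_cycleCount (ω ^ 2)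
  rw [map_pow, Int.units_sq, eq_comm, neg_one_pow_eq_one_iff_even (by decide)] at h
  exact Nat.not_even_iff_odd.mp fun hc =>
    Nat.not_even_iff_odd.mpr hodd ((Nat.even_add.mp h).mpr hc)

/-- Each cycle of `ω` meets at most two classes of `s`. Those meeting two of them split into two
cycles of `ω ^ 2`, and joining the two classes met by each of them connects all classes. -/
theorem two_mul_card_quotient_le_cycleCount_sq_add_two (s : Setoid Ω) (ω : Perm Ω)
    (hs : SameCycle.setoid (ω ^ 2) ≤ s) (htop : s ⊔ SameCycle.setoid ω = ⊤) :
    2 * Nat.card (Quotient s) ≤ cycleCount (ω ^ 2) + 2 := by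
  classical
  let B : Finset (Quotient (SameCycle.setoid ω)) := {w | ¬ s w.out (ω w.out)}
  set F : Finset (Ω × Ω) := B.image fun w => (w.out, ω w.out)
  set t := s ⊔ Relation.EqvGen.setoid fun x y => (x, y) ∈ F
  have hW : SameCycle.setoid ω ≤ t := by
    rw [← orbitRel_zpowers, Subgroup.zpowers_eq_closure]
    refine orbitRel_closure_le fun _ h x => ?_
    rw [Set.mem_singleton_iff.mp h]
    set x₀ := (⟦x⟧ : Quotient (SameCycle.setoid ω)).out
    have hx₀ : ω.SameCycle x₀ x := Quotient.mk_out (s := SameCycle.setoid ω) x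
    have h₀ : t x₀ (ω x₀) := by
      by_cases hw : ⟦x⟧ ∈ B
      · exact le_sup_right (a := s) (Relation.EqvGen.rel _ _ (Finset.mem_image_of_mem _ hw))
      · exact le_sup_left (b := Relation.EqvGen.setoid _) (by simpa [B] using hw)
    have hst : s ≤ t := le_sup_left
    have key : ∀ y, ω.SameCycle x₀ y → t x₀ y := fun y hy =>
      (sameCycle_sq_or_sameCycle_sq_apply hy).elim (fun h => hst (hs h))
        (fun h => t.trans' h₀ (hst (hs h)))
    exact t.trans' (t.symm' (key x hx₀)) (key (ω x) (sameCycle_apply_right.mpr hx₀))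
  have hconn : Nat.card (Quotient t) ≤ 1 := by
    rw [top_unique (htop ▸ sup_le le_sup_left hW : ⊤ ≤ t)]
    exact Finite.card_le_one_iff_subsingleton.mpr (Quotient.subsingleton_iff.mpr rfl)
  have hB := card_mul_two_le_cycleCount_sq hs B fun w hw => by simpa [B] using hw
  have hs : Nat.card (Quotient s) ≤ Nat.card (Quotient t) + F.card :=
    Setoid.card_quotient_le_sup_eqvGen_add_card s F
  have hF : F.card ≤ B.card := Finset.card_image_le
  omega

theorem two_mul_card_orbits_le_cycleCount_sq_add_one
    (hodd : Odd (Fintype.card Ω)) (H : Subgroup (Perm Ω)) (ω : Perm Ω) (hω : ω ^ 2 ∈ H)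
    (htrans : SubgroupTransitive (H ⊔ Subgroup.zpowers ω)) :
    2 * Nat.card (Quotient (orbitRel H Ω)) ≤ cycleCount (ω ^ 2) + 1 := by
  have hle : orbitRel ↥(H ⊔ Subgroup.zpowers ω) Ω ≤ orbitRel H Ω ⊔ SameCycle.setoid ω := by
    rw [Subgroup.sup_eq_closure]
    refine orbitRel_closure_le fun g hg x => hg.elim (fun hg => ?_) fun hg => ?_
    · exact le_sup_left (b := SameCycle.setoid ω) (orbitRel_apply_self hg x)
    · obtain ⟨k, rfl⟩ := Subgroup.mem_zpowers_iff.mp hg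
      exact le_sup_right (a := orbitRel H Ω) ⟨k, rfl⟩
  have htop : orbitRel H Ω ⊔ SameCycle.setoid ω = ⊤ := Setoid.eq_top_iff.mpr fun x y =>
    let ⟨g, hg, hgx⟩ := htrans x y
    hle (hgx ▸ orbitRel_apply_self hg x)
  have := two_mul_card_quotient_le_cycleCount_sq_add_two _ ω
    (fun _ _ h => orbitRel_of_sameCycle hω h) htop
  obtain ⟨k, hk⟩ := odd_cycleCount_sq hodd ω
  omega

end LowerBound

theorem statement_12_general {Ω : Type*} [Fintype Ω] [DecidableEq Ω] (d : ℕ)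
    (hcard : Fintype.card Ω = d) (hd : Odd d)
    (D₁ D₂ : Multiset ℕ)
    (hsum : nu D₁ + nu D₂ = d - 1)
    (α β : Equiv.Perm Ω) (hα : fullCycleType α = D₁) (hβ : fullCycleType β = D₂)
    (t : ℕ) (horb : numOrbits (Subgroup.closure {α, β}) = t)
    (ω : Equiv.Perm Ω) (hω : ω ^ 2 = α * β)
    (htrans : SubgroupTransitive (Subgroup.closure {α, β, ω})) :
    numOrbits (Subgroup.zpowers (α * β)) = 2 * t - 1 := by
  have hcα := cycleCount_add_nu_fullCycleType α
  have hcβ := cycleCount_add_nu_fullCycleType β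
  rw [hα, hcard] at hcα
  rw [hβ, hcard] at hcβ
  have hupper := cycleCount_add_cycleCount_add_cycleCount_mul_le α β
  have hαH : α ∈ Subgroup.closure {α, β} := Subgroup.subset_closure (by simp)
  have hβH : β ∈ Subgroup.closure {α, β} := Subgroup.subset_closure (by simp)
  have hsub : Subgroup.closure {α, β, ω} ≤ Subgroup.closure {α, β} ⊔ Subgroup.zpowers ω := by
    simp only [Subgroup.closure_le, Set.insert_subset_iff, Set.singleton_subset_iff,
      SetLike.mem_coe]
    exact ⟨Subgroup.mem_sup_left hαH, Subgroup.mem_sup_left hβH,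
      Subgroup.mem_sup_right (Subgroup.mem_zpowers ω)⟩
  have hlower := two_mul_card_orbits_le_cycleCount_sq_add_one (hcard ▸ hd) _ ω
    (hω ▸ mul_mem hαH hβH) (htrans.mono hsub)
  rw [hω] at hlower
  rw [numOrbits_eq_card_quotient] at horb
  rw [numOrbits_zpowers]
  obtain ⟨k, rfl⟩ := hd
  omega

/-- If `gcd(D₁) ≠ 1`, `⟨α, β⟩` has exactly `t` orbits and there is `ω` with
`ω² = αβ` making `⟨α, β, ω⟩` transitive, then `αβ` is a product of exactly `2t − 1`
disjoint cycles (orbits of `⟨αβ⟩`, fixed points included). -/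
theorem statement_12 {Ω : Type*} [Fintype Ω] [DecidableEq Ω] (d : ℕ)
    (hcard : Fintype.card Ω = d) (hd : Odd d) (hdpos : 0 < d)
    (D₁ D₂ : Multiset ℕ) (hP1 : IsPartitionOf d D₁) (hP2 : IsPartitionOf d D₂)
    (hsum : nu D₁ + nu D₂ = d - 1)
    (hgcd : D₁.gcd ≠ 1)
    (α β : Equiv.Perm Ω) (hα : fullCycleType α = D₁) (hβ : fullCycleType β = D₂)
    (t : ℕ) (horb : numOrbits (Subgroup.closure {α, β}) = t)
    (ω : Equiv.Perm Ω) (hω : ω ^ 2 = α * β)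
    (htrans : SubgroupTransitive (Subgroup.closure {α, β, ω})) :
    numOrbits (Subgroup.zpowers (α * β)) = 2 * t - 1 :=
  statement_12_general d hcard hd D₁ D₂ hsum α β hα hβ t horb ω hω htrans
end
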